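/- Let I₁, I₂ ⊆ ℝ be nonempty open intervals and D = (1/2)(I₁+I₂). Suppose φ, f₁, f₂ satisfy φ((x+y)/2)(f₁(x) − f₂(y)) = 0 for all x ∈ I₁, y ∈ I₂, the zero set Z_φ is closed in D and Z_φ ≠ D. Then for every p in the closure (within D) of the complement of Z_φ, there exists λ ∈ ℝ such that f₁ ≡ λ on (2p − I₂) ∩ I₁ and f₂ ≡ λ on (2p − I₁) ∩ I₂. -/
import Mathlib


/-- The set `(1/2)(A + B) = {(a+b)/2 : a ∈ A, b ∈ B}`. -/
def halfSum (A B : Set ℝ) : Set ℝ := {u | ∃ a ∈ A, ∃ b ∈ B, u = (a + b) / 2}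

private lemma chain_const (s : Set ℝ) (hs : s.OrdConnected) (g : ℝ → ℝ) (δ : ℝ) (hδ : 0 < δ)
    (h : ∀ a ∈ s, ∀ b ∈ s, |a - b| < δ → g a = g b) :
    ∀ a ∈ s, ∀ b ∈ s, g a = g b := by
  have key : ∀ n : ℕ, ∀ a ∈ s, ∀ b ∈ s, a ≤ b → b - a ≤ n * (δ / 2) → g a = g b := by
    intro n
    induction n with
    | zero =>
      intro a ha b hb hab hle
      have : a = b := le_antisymm hab (by push_cast at hle; linarith)
      rw [this]
    | succ n ih =>
      intro a ha b hb hab hle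
      by_cases hcase : b - a < δ
      · exact h a ha b hb (by rw [abs_sub_lt_iff]; constructor <;> linarith)
      · push_neg at hcase
        have hm : b - δ / 2 ∈ s := hs.out ha hb ⟨by linarith, by linarith⟩
        have h1 : g a = g (b - δ / 2) := ih a ha (b - δ / 2) hm (by linarith)
          (by push_cast at hle ⊢; linarith)
        have h2 : g (b - δ / 2) = g b := h _ hm b hb
          (by rw [abs_sub_lt_iff]; constructor <;> linarith)
        rw [h1, h2]
  intro a ha b hb
  rcases le_total a b with hab | hab
  · obtain ⟨n, hn⟩ := exists_nat_ge ((b - a) / (δ / 2))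
    exact key n a ha b hb hab (by rw [div_le_iff₀ (by linarith)] at hn; linarith)
  · obtain ⟨n, hn⟩ := exists_nat_ge ((a - b) / (δ / 2))
    exact (key n b hb a ha hab (by rw [div_le_iff₀ (by linarith)] at hn; linarith)).symm

theorem const_on_reflections_of_closure (I₁ I₂ : Set ℝ)
    (hI₁o : IsOpen I₁) (hI₁c : I₁.OrdConnected) (hI₁n : I₁.Nonempty)
    (hI₂o : IsOpen I₂) (hI₂c : I₂.OrdConnected) (hI₂n : I₂.Nonempty)
    (φ f₁ f₂ : ℝ → ℝ)
    (heq : ∀ x ∈ I₁, ∀ y ∈ I₂, φ ((x + y) / 2) * (f₁ x - f₂ y) = 0)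
    (hZclosed : closure {u ∈ halfSum I₁ I₂ | φ u = 0} ∩ halfSum I₁ I₂ ⊆
      {u ∈ halfSum I₁ I₂ | φ u = 0})
    (hZne : {u ∈ halfSum I₁ I₂ | φ u = 0} ≠ halfSum I₁ I₂)
    (p : ℝ) (hp : p ∈ halfSum I₁ I₂)
    (hpcl : p ∈ closure (halfSum I₁ I₂ \ {u ∈ halfSum I₁ I₂ | φ u = 0})) :
    ∃ c : ℝ, (∀ x ∈ {x | ∃ s ∈ I₂, x = 2 * p - s} ∩ I₁, f₁ x = c) ∧
      (∀ y ∈ {y | ∃ s ∈ I₁, y = 2 * p - s} ∩ I₂, f₂ y = c) := by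
  -- openness of halfSum
  have hDopen : ∀ u ∈ halfSum I₁ I₂, ∃ δ > 0, ∀ v : ℝ, |v - u| < δ → v ∈ halfSum I₁ I₂ := by
    rintro u ⟨a, ha, b, hb, rfl⟩
    obtain ⟨δ, hδpos, hball⟩ := Metric.isOpen_iff.1 hI₁o a ha
    refine ⟨δ / 2, by linarith, fun v hv => ?_⟩
    refine ⟨2 * v - b, hball ?_, b, hb, by ring⟩
    rw [Metric.mem_ball, Real.dist_eq]
    have : 2 * v - b - a = 2 * (v - (a + b) / 2) := by ring
    rw [this, abs_mul, abs_two]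
    linarith
  -- the complement of the zero set is open
  have hUopen : ∀ u, u ∈ halfSum I₁ I₂ → φ u ≠ 0 →
      ∃ ε > 0, ∀ v : ℝ, |v - u| < ε → v ∈ halfSum I₁ I₂ ∧ φ v ≠ 0 := by
    intro u hu hφu
    have hunZ : u ∉ closure {u ∈ halfSum I₁ I₂ | φ u = 0} := by
      intro hmem
      exact hφu (hZclosed ⟨hmem, hu⟩).2
    obtain ⟨ε₁, hε₁pos, hball₁⟩ :=
      Metric.isOpen_iff.1 isClosed_closure.isOpen_compl u hunZ
    obtain ⟨δ, hδpos, hD⟩ := hDopen u hu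
    refine ⟨min ε₁ δ, lt_min hε₁pos hδpos, fun v hv => ?_⟩
    have hvD : v ∈ halfSum I₁ I₂ := hD v (lt_of_lt_of_le hv (min_le_right _ _))
    refine ⟨hvD, fun hφv => ?_⟩
    have : v ∈ (closure {u ∈ halfSum I₁ I₂ | φ u = 0})ᶜ := by
      apply hball₁
      rw [Metric.mem_ball, Real.dist_eq]
      exact lt_of_lt_of_le hv (min_le_left _ _)
    exact this (subset_closure ⟨hvD, hφv⟩)
  -- f₁ is constant on (2u - I₂) ∩ I₁ for u with φ u ≠ 0, u ∈ D
  have key1 : ∀ u, u ∈ halfSum I₁ I₂ → φ u ≠ 0 →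
      ∀ x, (2 * u - x ∈ I₂ ∧ x ∈ I₁) → ∀ x', (2 * u - x' ∈ I₂ ∧ x' ∈ I₁) → f₁ x = f₁ x' := by
    intro u hu hφu
    obtain ⟨ε, hεpos, hε⟩ := hUopen u hu hφu
    have hords : Set.OrdConnected {x : ℝ | 2 * u - x ∈ I₂ ∧ x ∈ I₁} := by
      constructor
      rintro a ⟨ha2, ha1⟩ b ⟨hb2, hb1⟩ c hc
      exact ⟨hI₂c.out hb2 ha2 ⟨by linarith [hc.2], by linarith [hc.1]⟩,
        hI₁c.out ha1 hb1 hc⟩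
    have hlocal : ∀ a ∈ {x : ℝ | 2 * u - x ∈ I₂ ∧ x ∈ I₁},
        ∀ b ∈ {x : ℝ | 2 * u - x ∈ I₂ ∧ x ∈ I₁}, |a - b| < 2 * ε → f₁ a = f₁ b := by
      rintro a ⟨ha2, ha1⟩ b ⟨hb2, hb1⟩ hab
      set v := u + (b - a) / 2 with hv
      have hvnear : |v - u| < ε := by
        have : v - u = (b - a) / 2 := by rw [hv]; ring
        rw [this, abs_div, abs_two, abs_sub_comm]
        linarith
      obtain ⟨hvD, hφv⟩ := hε v hvnear
      have e1 : f₁ a = f₂ (2 * u - a) := by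
        have := heq a ha1 (2 * u - a) ha2
        rw [show (a + (2 * u - a)) / 2 = u by ring] at this
        have := (mul_eq_zero.1 this).resolve_left hφu
        linarith
      have e2 : f₁ b = f₂ (2 * u - a) := by
        have := heq b hb1 (2 * u - a) ha2
        rw [show (b + (2 * u - a)) / 2 = v by rw [hv]; ring] at this
        have := (mul_eq_zero.1 this).resolve_left hφv
        linarith
      rw [e1, e2]
    intro x hx x' hx'
    exact chain_const _ hords f₁ (2 * ε) (by linarith) hlocal x hx x' hx'
  -- f₁ takes equal values on (2p - I₂) ∩ I₁
  have key2 : ∀ x ∈ {x | ∃ s ∈ I₂, x = 2 * p - s} ∩ I₁,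
      ∀ x' ∈ {x | ∃ s ∈ I₂, x = 2 * p - s} ∩ I₁, f₁ x = f₁ x' := by
    rintro x ⟨⟨sx, hsx, hxeq⟩, hx1⟩ x' ⟨⟨sx', hsx', hxeq'⟩, hx1'⟩
    obtain ⟨δx, hδxpos, hballx⟩ := Metric.isOpen_iff.1 hI₂o sx hsx
    obtain ⟨δx', hδxpos', hballx'⟩ := Metric.isOpen_iff.1 hI₂o sx' hsx'
    rw [Metric.mem_closure_iff] at hpcl
    obtain ⟨u, hu, hdist⟩ := hpcl (min δx δx' / 2) (by positivity)
    rw [Real.dist_eq] at hdist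
    obtain ⟨huD, hunZ⟩ := hu
    have hφu : φ u ≠ 0 := fun h => hunZ ⟨huD, h⟩
    have hx2 : 2 * u - x ∈ I₂ := by
      apply hballx
      rw [Metric.mem_ball, Real.dist_eq]
      have : 2 * u - x - sx = 2 * (u - p) := by rw [hxeq]; ring
      rw [this, abs_mul, abs_two, abs_sub_comm]
      have := min_le_left δx δx'
      linarith
    have hx2' : 2 * u - x' ∈ I₂ := by
      apply hballx'
      rw [Metric.mem_ball, Real.dist_eq]
      have : 2 * u - x' - sx' = 2 * (u - p) := by rw [hxeq']; ring
      rw [this, abs_mul, abs_two, abs_sub_comm]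
      have := min_le_right δx δx'
      linarith
    exact key1 u huD hφu x ⟨hx2, hx1⟩ x' ⟨hx2', hx1'⟩
  -- produce the constant
  obtain ⟨a, ha, b, hb, hpab⟩ := hp
  have haJ : a ∈ {x | ∃ s ∈ I₂, x = 2 * p - s} ∩ I₁ :=
    ⟨⟨b, hb, by rw [hpab]; ring⟩, ha⟩
  refine ⟨f₁ a, fun x hx => key2 x hx a haJ, ?_⟩
  rintro y ⟨⟨t, ht, hyeq⟩, hy2⟩
  obtain ⟨δt, hδtpos, hballt⟩ := Metric.isOpen_iff.1 hI₁o t ht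
  obtain ⟨δy, hδypos, hbally⟩ := Metric.isOpen_iff.1 hI₂o y hy2
  rw [Metric.mem_closure_iff] at hpcl
  obtain ⟨u, hu, hdist⟩ := hpcl (min δt δy / 2) (by positivity)
  rw [Real.dist_eq] at hdist
  obtain ⟨huD, hunZ⟩ := hu
  have hφu : φ u ≠ 0 := fun h => hunZ ⟨huD, h⟩
  have h1 : 2 * u - y ∈ I₁ := by
    apply hballt
    rw [Metric.mem_ball, Real.dist_eq]
    have : 2 * u - y - t = 2 * (u - p) := by rw [hyeq]; ring
    rw [this, abs_mul, abs_two, abs_sub_comm]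
    have := min_le_left δt δy
    linarith
  have h2 : 2 * p - (2 * u - y) ∈ I₂ := by
    apply hbally
    rw [Metric.mem_ball, Real.dist_eq]
    have : 2 * p - (2 * u - y) - y = 2 * (p - u) := by ring
    rw [this, abs_mul, abs_two]
    have := min_le_right δt δy
    linarith
  have e1 : f₂ y = f₁ (2 * u - y) := by
    have := heq (2 * u - y) h1 y hy2
    rw [show (2 * u - y + y) / 2 = u by ring] at this
    have := (mul_eq_zero.1 this).resolve_left hφu
    linarith
  rw [e1]
  exact key2 (2 * u - y) ⟨⟨2 * p - (2 * u - y), h2, by ring⟩, h1⟩ a haJ
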